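/- arXiv:1711.02543 — 7 statements merged into one kernel-verified Lean document; each statement's English description precedes it below -/
import Mathlib

section
/- Let T_μ^{(n)} : C → E (n ∈ ℕ) be the mappings determined by ⟨T_μ^{(n)}x, x*⟩ = μ_t⟨T_t^n x, x*⟩ for all x ∈ C and x* ∈ E* (these exist and are unique since the weak closure of each orbit is weakly compact). If the representation 𝒮 is uniformly asymptotically nonexpansive, i.e. limsup_{n→∞} sup_{t∈S} ‖T_t^n x − T_t^n y‖ ≤ ‖x − y‖ for all x, y ∈ C, then limsup_{n→∞} ‖T_μ^{(n)}x − T_μ^{(n)}y‖ ≤ ‖x − y‖ for all x, y ∈ C. -/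
open Filter Topology
open scoped ENNReal

/-!
Testing `T_μ^{(n)}x - T_μ^{(n)}y` against a functional `φ` and using `‖μ‖ = 1` gives
`|φ (T_μ^{(n)}x - T_μ^{(n)}y)| ≤ ‖φ‖ · sup_t ‖T_t^n x - T_t^n y‖`, so by Hahn–Banach
`‖T_μ^{(n)}x - T_μ^{(n)}y‖ ≤ sup_t ‖T_t^n x - T_t^n y‖` for every `n`; now take `limsup`.
-/

section WeakMean

variable {S E : Type*} [NormedAddCommGroup E] [NormedSpace ℝ E]
  {X : Submodule ℝ (lp (fun _ : S => ℝ) ∞)}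

/-- `u = μ_t (f t)` weakly: `⟨u, φ⟩ = μ_t ⟨f t, φ⟩` for every `φ ∈ E*`. -/
def HasWeakMean (μ : X →L[ℝ] ℝ) (f : S → E) (u : E) : Prop :=
  ∀ φ : E →L[ℝ] ℝ, ∃ a : lp (fun _ : S => ℝ) ∞, ∃ ha : a ∈ X,
    (∀ t, a t = φ (f t)) ∧ μ ⟨a, ha⟩ = φ u

namespace HasWeakMean

variable {μ : X →L[ℝ] ℝ} {f g : S → E} {u v : E}

theorem sub (hf : HasWeakMean μ f u) (hg : HasWeakMean μ g v) :
    HasWeakMean μ (f - g) (u - v) := by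
  intro φ
  obtain ⟨a, ha, haf, hau⟩ := hf φ
  obtain ⟨b, hb, hbg, hbv⟩ := hg φ
  refine ⟨a - b, X.sub_mem ha hb, fun t => ?_, ?_⟩
  · simp only [lp.coeFn_sub, Pi.sub_apply, haf, hbg, map_sub]
  · change μ (⟨a, ha⟩ - ⟨b, hb⟩) = φ (u - v)
    rw [map_sub, map_sub, hau, hbv]

theorem norm_le (hf : HasWeakMean μ f u) (hμ : ‖μ‖ ≤ 1) {m : ℝ} (hm : 0 ≤ m)
    (hfm : ∀ t, ‖f t‖ ≤ m) : ‖u‖ ≤ m := by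
  refine NormedSpace.norm_le_dual_bound ℝ u hm fun φ => ?_
  obtain ⟨a, ha, haf, hau⟩ := hf φ
  have ha_norm : ‖a‖ ≤ m * ‖φ‖ :=
    lp.norm_le_of_forall_le (by positivity) fun t => by
      rw [haf, mul_comm]
      exact φ.le_opNorm_of_le (hfm t)
  calc ‖φ u‖ = ‖μ ⟨a, ha⟩‖ := by rw [hau]
    _ ≤ ‖μ‖ * ‖a‖ := μ.le_opNorm _
    _ ≤ m * ‖φ‖ := (mul_le_of_le_one_left (norm_nonneg a) hμ).trans ha_norm

theorem nnnorm_le_iSup (hf : HasWeakMean μ f u) (hμ : ‖μ‖ ≤ 1) :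
    (‖u‖₊ : ℝ≥0∞) ≤ ⨆ t, (‖f t‖₊ : ℝ≥0∞) := by
  set M := ⨆ t, (‖f t‖₊ : ℝ≥0∞)
  rcases eq_or_ne M ⊤ with hM | hM
  · exact hM ▸ le_top
  have hfM : ∀ t, ‖f t‖ ≤ M.toReal := fun t => by
    rw [← ENNReal.toReal_ofReal (norm_nonneg _), ofReal_norm, enorm_eq_nnnorm]
    exact ENNReal.toReal_mono hM (le_iSup (fun t => (‖f t‖₊ : ℝ≥0∞)) t)
  rw [← enorm_eq_nnnorm, ← ofReal_norm]
  exact ENNReal.ofReal_le_of_le_toReal (hf.norm_le hμ ENNReal.toReal_nonneg hfM)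

end HasWeakMean

end WeakMean

theorem tmu_asymptotically_nonexpansive_general
    {S E : Type*}
    [NormedAddCommGroup E] [NormedSpace ℝ E]
    -- C nonempty closed convex
    (C : Set E)
    -- the representation
    (T : S → E → E)
    -- X a subspace of ℓ^∞(S) containing all functions t ↦ ⟨T_t^n x, x*⟩
    (X : Submodule ℝ (lp (fun _ : S => ℝ) ∞))
    (hX : ∀ x ∈ C, ∀ (n : ℕ) (φ : E →L[ℝ] ℝ),
      ∃ g : lp (fun _ : S => ℝ) ∞, g ∈ X ∧ ∀ t : S, g t = φ ((T t)^[n] x))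
    -- μ a mean on X : ‖μ‖ = μ(1) = 1 (X contains the constant function 1)
    (μ : X →L[ℝ] ℝ)
    (hμnorm : ‖μ‖ = 1)
    -- the mappings T_μ^{(n)} determined by ⟨T_μ^{(n)}x, x*⟩ = μ_t⟨T_t^n x, x*⟩
    (Tμ : ℕ → E → E)
    (hTμ : ∀ (n : ℕ), ∀ x ∈ C, ∀ (φ : E →L[ℝ] ℝ)
        (g : lp (fun _ : S => ℝ) ∞) (hg : g ∈ X),
      (∀ t : S, g t = φ ((T t)^[n] x)) → μ ⟨g, hg⟩ = φ (Tμ n x))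
    -- 𝒮 is uniformly asymptotically nonexpansive
    (huan : ∀ x ∈ C, ∀ y ∈ C,
      Filter.limsup (fun n : ℕ => ⨆ t : S, (‖(T t)^[n] x - (T t)^[n] y‖₊ : ℝ≥0∞)) atTop
        ≤ (‖x - y‖₊ : ℝ≥0∞)) :
    ∀ x ∈ C, ∀ y ∈ C,
      Filter.limsup (fun n : ℕ => (‖Tμ n x - Tμ n y‖₊ : ℝ≥0∞)) atTop
        ≤ (‖x - y‖₊ : ℝ≥0∞) := by
  have hmean : ∀ n, ∀ x ∈ C, HasWeakMean μ (fun t => (T t)^[n] x) (Tμ n x) := fun n x hx φ => by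
    obtain ⟨g, hg, hgφ⟩ := hX x hx n φ
    exact ⟨g, hg, hgφ, hTμ n x hx φ g hg hgφ⟩
  intro x hx y hy
  refine (limsup_le_limsup (Eventually.of_forall fun n => ?_)).trans (huan x hx y hy)
  exact ((hmean n x hx).sub (hmean n y hy)).nnnorm_le_iSup hμnorm.le

/-- If the representation `𝒮 = {T_s : s ∈ S}` is uniformly asymptotically nonexpansive,
then the mappings `T_μ^{(n)}` determined by `⟨T_μ^{(n)}x, x*⟩ = μ_t⟨T_t^n x, x*⟩` satisfy
`limsup_n ‖T_μ^{(n)}x − T_μ^{(n)}y‖ ≤ ‖x − y‖` for all `x, y ∈ C`. -/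
theorem tmu_asymptotically_nonexpansive
    {S E : Type*} [Semigroup S]
    [NormedAddCommGroup E] [NormedSpace ℝ E] [CompleteSpace E]
    -- E is reflexive
    (hrefl : Function.Surjective (NormedSpace.inclusionInDoubleDual ℝ E))
    -- C nonempty closed convex
    (C : Set E) (hCne : C.Nonempty) (hCcl : IsClosed C) (hCcv : Convex ℝ C)
    -- the representation
    (T : S → E → E)
    (hTC : ∀ s : S, ∀ x ∈ C, T s x ∈ C)
    (hrep : ∀ s t : S, ∀ x ∈ C, T (s * t) x = T s (T t x))
    -- weak closure of each orbit is weakly compact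
    (hwcpt : ∀ x ∈ C, IsCompact (closure (Set.range (fun t => T t x) : Set (WeakSpace ℝ E))))
    -- X a subspace of ℓ^∞(S) containing all functions t ↦ ⟨T_t^n x, x*⟩
    (X : Submodule ℝ (lp (fun _ : S => ℝ) ∞))
    (hX : ∀ x ∈ C, ∀ (n : ℕ) (φ : E →L[ℝ] ℝ),
      ∃ g : lp (fun _ : S => ℝ) ∞, g ∈ X ∧ ∀ t : S, g t = φ ((T t)^[n] x))
    -- μ a mean on X : ‖μ‖ = μ(1) = 1 (X contains the constant function 1)
    (μ : X →L[ℝ] ℝ)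
    (hμnorm : ‖μ‖ = 1)
    (hμone : ∃ g : lp (fun _ : S => ℝ) ∞, ∃ hg : g ∈ X,
      (∀ t : S, g t = 1) ∧ μ ⟨g, hg⟩ = 1)
    -- the mappings T_μ^{(n)} determined by ⟨T_μ^{(n)}x, x*⟩ = μ_t⟨T_t^n x, x*⟩
    (Tμ : ℕ → E → E)
    (hTμ : ∀ (n : ℕ), ∀ x ∈ C, ∀ (φ : E →L[ℝ] ℝ)
        (g : lp (fun _ : S => ℝ) ∞) (hg : g ∈ X),
      (∀ t : S, g t = φ ((T t)^[n] x)) → μ ⟨g, hg⟩ = φ (Tμ n x))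
    -- 𝒮 is uniformly asymptotically nonexpansive
    (huan : ∀ x ∈ C, ∀ y ∈ C,
      Filter.limsup (fun n : ℕ => ⨆ t : S, (‖(T t)^[n] x - (T t)^[n] y‖₊ : ℝ≥0∞)) atTop
        ≤ (‖x - y‖₊ : ℝ≥0∞)) :
    ∀ x ∈ C, ∀ y ∈ C,
      Filter.limsup (fun n : ℕ => (‖Tμ n x - Tμ n y‖₊ : ℝ≥0∞)) atTop
        ≤ (‖x - y‖₊ : ℝ≥0∞) :=
  tmu_asymptotically_nonexpansive_general C T X hX μ hμnorm Tμ hTμ huan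
end

section
/- For every x ∈ C, the element T_μ x belongs to the closure of the convex hull of {T_t x : t ∈ S}; in particular T_μ maps C into C. -/
open scoped ENNReal

/-! A mean is a positive functional, so `μ_t ⟨T_t x, φ⟩ ≤ sup_t ⟨T_t x, φ⟩` for every continuous
functional `φ`; by Hahn–Banach, a point whose values under every `φ` are dominated in this way lies
in the closed convex hull of the orbit, and that hull lies in the closed convex set `C`. -/

theorem mean_le_of_forall_le {ι : Type*} {X : Submodule ℝ (lp (fun _ : ι => ℝ) ∞)}
    {μ : X →L[ℝ] ℝ} (hμ : ‖μ‖ ≤ 1) {e : X} (he : ∀ i, e.1 i = 1)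
    (hμe : μ e = 1) (g : X) {u : ℝ} (hg : ∀ i, g.1 i ≤ u) : μ g ≤ u := by
  -- shift `g` by a constant so that it becomes nonnegative; then its norm is at most `u - c`
  set c : ℝ := -(‖g‖ + |u|)
  have hshift : ∀ i, (g - c • e).1 i = g.1 i - c := fun i => by
    change g.1 i - c * e.1 i = _
    rw [he, mul_one]
  have hnorm : ‖(g - c • e).1‖ ≤ u - c := by
    refine lp.norm_le_of_forall_le (by linarith [norm_nonneg g, neg_abs_le u]) fun i => ?_
    have hlow : -‖g‖ ≤ g.1 i :=
      neg_le_of_abs_le (lp.norm_apply_le_norm ENNReal.top_ne_zero g.1 i)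
    rw [hshift, Real.norm_of_nonneg (by linarith [abs_nonneg u])]
    linarith [hg i]
  have hμshift : μ (g - c • e) = μ g - c := by
    rw [map_sub, map_smul, hμe, smul_eq_mul, mul_one]
  calc μ g = μ (g - c • e) + c := by rw [hμshift]; ring
    _ ≤ ‖μ‖ * ‖g - c • e‖ + c := by gcongr; exact (le_abs_self _).trans (μ.le_opNorm _)
    _ ≤ 1 * (u - c) + c := by gcongr; exact hnorm
    _ = u := by ring

theorem mem_closure_convexHull_of_forall_le {E : Type*} [TopologicalSpace E] [AddCommGroup E]
    [Module ℝ E] [IsTopologicalAddGroup E] [ContinuousSMul ℝ E] [LocallyConvexSpace ℝ E]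
    {A : Set E} {y : E} (h : ∀ (φ : StrongDual ℝ E) (u : ℝ), (∀ a ∈ A, φ a ≤ u) → φ y ≤ u) :
    y ∈ closure (convexHull ℝ A) := by
  by_contra hy
  obtain ⟨φ, u, hlt, hgt⟩ :=
    geometric_hahn_banach_closed_point (convex_convexHull ℝ A).closure isClosed_closure hy
  have hA : ∀ a ∈ A, φ a ≤ u := fun a ha =>
    (hlt a (subset_closure (subset_convexHull ℝ A ha))).le
  exact (h φ u hA).not_gt hgt

theorem tmu_mem_closure_convexHull_general
    {S E : Type*}
    [NormedAddCommGroup E] [NormedSpace ℝ E]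
    -- C nonempty closed convex
    (C : Set E) (hCcl : IsClosed C) (hCcv : Convex ℝ C)
    -- the representation
    (T : S → E → E)
    (hTC : ∀ s : S, ∀ x ∈ C, T s x ∈ C)
    -- X a subspace of ℓ^∞(S) containing all functions t ↦ ⟨T_t x, x*⟩
    (X : Submodule ℝ (lp (fun _ : S => ℝ) ∞))
    (hX : ∀ x ∈ C, ∀ φ : E →L[ℝ] ℝ,
      ∃ g : lp (fun _ : S => ℝ) ∞, g ∈ X ∧ ∀ t : S, g t = φ (T t x))
    -- μ a mean on X : ‖μ‖ = μ(1) = 1 (X contains the constant function 1)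
    (μ : X →L[ℝ] ℝ)
    (hμnorm : ‖μ‖ = 1)
    (hμone : ∃ g : lp (fun _ : S => ℝ) ∞, ∃ hg : g ∈ X,
      (∀ t : S, g t = 1) ∧ μ ⟨g, hg⟩ = 1)
    -- the mapping T_μ determined by ⟨T_μ x, x*⟩ = μ_t⟨T_t x, x*⟩
    (Tμ : E → E)
    (hTμ : ∀ x ∈ C, ∀ (φ : E →L[ℝ] ℝ) (g : lp (fun _ : S => ℝ) ∞) (hg : g ∈ X),
      (∀ t : S, g t = φ (T t x)) → μ ⟨g, hg⟩ = φ (Tμ x))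
    :
    ∀ x ∈ C, Tμ x ∈ closure (convexHull ℝ (Set.range fun t => T t x)) ∧ Tμ x ∈ C := by
  intro x hx
  obtain ⟨e, he, he_one, hμe⟩ := hμone
  have hmem : Tμ x ∈ closure (convexHull ℝ (Set.range fun t => T t x)) := by
    refine mem_closure_convexHull_of_forall_le fun φ u hu => ?_
    obtain ⟨g, hg, hgφ⟩ := hX x hx φ
    rw [← hTμ x hx φ g hg hgφ]
    exact mean_le_of_forall_le hμnorm.le (e := ⟨e, he⟩) he_one hμe ⟨g, hg⟩
      fun t => (hgφ t).trans_le (hu _ ⟨t, rfl⟩)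
  have horbit : (Set.range fun t => T t x) ⊆ C := by
    rintro _ ⟨t, rfl⟩
    exact hTC t x hx
  exact ⟨hmem, closure_minimal (convexHull_min horbit hCcv) hCcl hmem⟩

/-- For every `x ∈ C`, `T_μ x` belongs to the closure of the convex hull of
`{T_t x : t ∈ S}`; in particular `T_μ` maps `C` into `C`. -/
theorem tmu_mem_closure_convexHull
    {S E : Type*} [Semigroup S]
    [NormedAddCommGroup E] [NormedSpace ℝ E] [CompleteSpace E]
    -- E is reflexive
    (hrefl : Function.Surjective (NormedSpace.inclusionInDoubleDual ℝ E))
    -- C nonempty closed convex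
    (C : Set E) (hCne : C.Nonempty) (hCcl : IsClosed C) (hCcv : Convex ℝ C)
    -- the representation
    (T : S → E → E)
    (hTC : ∀ s : S, ∀ x ∈ C, T s x ∈ C)
    (hrep : ∀ s t : S, ∀ x ∈ C, T (s * t) x = T s (T t x))
    -- weak closure of each orbit is weakly compact
    (hwcpt : ∀ x ∈ C, IsCompact (closure (Set.range (fun t => T t x) : Set (WeakSpace ℝ E))))
    -- X a subspace of ℓ^∞(S) containing all functions t ↦ ⟨T_t x, x*⟩
    (X : Submodule ℝ (lp (fun _ : S => ℝ) ∞))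
    (hX : ∀ x ∈ C, ∀ φ : E →L[ℝ] ℝ,
      ∃ g : lp (fun _ : S => ℝ) ∞, g ∈ X ∧ ∀ t : S, g t = φ (T t x))
    -- μ a mean on X : ‖μ‖ = μ(1) = 1 (X contains the constant function 1)
    (μ : X →L[ℝ] ℝ)
    (hμnorm : ‖μ‖ = 1)
    (hμone : ∃ g : lp (fun _ : S => ℝ) ∞, ∃ hg : g ∈ X,
      (∀ t : S, g t = 1) ∧ μ ⟨g, hg⟩ = 1)
    -- the mapping T_μ determined by ⟨T_μ x, x*⟩ = μ_t⟨T_t x, x*⟩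
    (Tμ : E → E)
    (hTμ : ∀ x ∈ C, ∀ (φ : E →L[ℝ] ℝ) (g : lp (fun _ : S => ℝ) ∞) (hg : g ∈ X),
      (∀ t : S, g t = φ (T t x)) → μ ⟨g, hg⟩ = φ (Tμ x))
    :
    ∀ x ∈ C, Tμ x ∈ closure (convexHull ℝ (Set.range fun t => T t x)) ∧ Tμ x ∈ C :=
  tmu_mem_closure_convexHull_general C hCcl hCcv T hTC X hX μ hμnorm hμone Tμ hTμ
end

section
/- If every mapping T_t (t ∈ S) is quasi-nonexpansive, i.e. ‖T_t x − f‖ ≤ ‖x − f‖ for every x ∈ C and every fixed point f of T_t, then T_μ is Fix(𝒮)-quasi-nonexpansive: ‖T_μ x − f‖ ≤ ‖x − f‖ for every x ∈ C and every f ∈ Fix(𝒮) = ∩_{s∈S}{x ∈ C : T_s x = x}. -/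
open scoped ENNReal

/-! Test `T_μ x - f` against an arbitrary functional `φ`. As `μ` is a mean,
`φ (T_μ x - f) = μ_t (φ (T_t x) - φ f)`; since `f` is fixed by every `T_t`, quasi-nonexpansiveness
bounds the integrand by `‖φ‖ ‖x - f‖` uniformly in `t`, a mean preserves such a bound, and
Hahn–Banach turns the bounds on all `φ (T_μ x - f)` into `‖T_μ x - f‖ ≤ ‖x - f‖`. -/

theorem abs_map_sub_le_of_forall_abs_sub_le {S : Type*} {X : Submodule ℝ (lp (fun _ : S => ℝ) ∞)}
    (μ : X →L[ℝ] ℝ) (hμ : ‖μ‖ ≤ 1) {e : X} (he : ∀ t, (e : lp (fun _ : S => ℝ) ∞) t = 1)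
    (hμe : μ e = 1) {g : X} {c M : ℝ} (hM : 0 ≤ M)
    (hg : ∀ t, |(g : lp (fun _ : S => ℝ) ∞) t - c| ≤ M) : |μ g - c| ≤ M := by
  have hnorm : ‖(g - c • e : lp (fun _ : S => ℝ) ∞)‖ ≤ M :=
    lp.norm_le_of_forall_le hM fun t => by
      rw [lp.coeFn_sub, lp.coeFn_smul, Pi.sub_apply, Pi.smul_apply, he t, smul_eq_mul, mul_one,
        Real.norm_eq_abs]
      exact hg t
  calc |μ g - c| = ‖μ (g - c • e)‖ := by
        rw [map_sub, map_smul, hμe, smul_eq_mul, mul_one, Real.norm_eq_abs]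
    _ ≤ ‖μ‖ * ‖g - c • e‖ := μ.le_opNorm _
    _ ≤ 1 * M := mul_le_mul hμ hnorm (norm_nonneg _) zero_le_one
    _ = M := one_mul M

theorem tmu_fix_quasi_nonexpansive_general
    {S E : Type*}
    [NormedAddCommGroup E] [NormedSpace ℝ E]
    (C : Set E)
    -- the representation
    (T : S → E → E)
    -- X a subspace of ℓ^∞(S) containing all functions t ↦ ⟨T_t x, x*⟩
    (X : Submodule ℝ (lp (fun _ : S => ℝ) ∞))
    (hX : ∀ x ∈ C, ∀ φ : E →L[ℝ] ℝ,
      ∃ g : lp (fun _ : S => ℝ) ∞, g ∈ X ∧ ∀ t : S, g t = φ (T t x))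
    -- μ a mean on X : ‖μ‖ = μ(1) = 1 (X contains the constant function 1)
    (μ : X →L[ℝ] ℝ)
    (hμnorm : ‖μ‖ = 1)
    (hμone : ∃ g : lp (fun _ : S => ℝ) ∞, ∃ hg : g ∈ X,
      (∀ t : S, g t = 1) ∧ μ ⟨g, hg⟩ = 1)
    -- the mapping T_μ determined by ⟨T_μ x, x*⟩ = μ_t⟨T_t x, x*⟩
    (Tμ : E → E)
    (hTμ : ∀ x ∈ C, ∀ (φ : E →L[ℝ] ℝ) (g : lp (fun _ : S => ℝ) ∞) (hg : g ∈ X),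
      (∀ t : S, g t = φ (T t x)) → μ ⟨g, hg⟩ = φ (Tμ x))
    -- every T_t is quasi-nonexpansive
    (hqne : ∀ t : S, ∀ x ∈ C, ∀ f ∈ C, T t f = f → ‖T t x - f‖ ≤ ‖x - f‖) :
    ∀ x ∈ C, ∀ f ∈ C, (∀ s : S, T s f = f) → ‖Tμ x - f‖ ≤ ‖x - f‖ := by
  intro x hx f hf hfix
  obtain ⟨e, he, het, hμe⟩ := hμone
  refine NormedSpace.norm_le_dual_bound ℝ _ (norm_nonneg (x - f)) fun φ => ?_
  obtain ⟨g, hg, hgt⟩ := hX x hx φ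
  have horbit : ∀ t, |g t - φ f| ≤ ‖x - f‖ * ‖φ‖ := fun t => calc
    |g t - φ f| = ‖φ (T t x - f)‖ := by rw [hgt, map_sub, Real.norm_eq_abs]
    _ ≤ ‖φ‖ * ‖T t x - f‖ := φ.le_opNorm _
    _ ≤ ‖φ‖ * ‖x - f‖ := by gcongr; exact hqne t x hx f hf (hfix t)
    _ = ‖x - f‖ * ‖φ‖ := mul_comm _ _
  rw [map_sub, ← hTμ x hx φ g hg hgt, Real.norm_eq_abs]
  exact abs_map_sub_le_of_forall_abs_sub_le μ hμnorm.le (e := ⟨e, he⟩) het hμe (by positivity)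
    horbit

/-- If every `T_t` is quasi-nonexpansive, then `T_μ` is `Fix(𝒮)`-quasi-nonexpansive. -/
theorem tmu_fix_quasi_nonexpansive
    {S E : Type*} [Semigroup S]
    [NormedAddCommGroup E] [NormedSpace ℝ E] [CompleteSpace E]
    -- E is reflexive
    (hrefl : Function.Surjective (NormedSpace.inclusionInDoubleDual ℝ E))
    -- C nonempty closed convex
    (C : Set E) (hCne : C.Nonempty) (hCcl : IsClosed C) (hCcv : Convex ℝ C)
    -- the representation
    (T : S → E → E)
    (hTC : ∀ s : S, ∀ x ∈ C, T s x ∈ C)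
    (hrep : ∀ s t : S, ∀ x ∈ C, T (s * t) x = T s (T t x))
    -- weak closure of each orbit is weakly compact
    (hwcpt : ∀ x ∈ C, IsCompact (closure (Set.range (fun t => T t x) : Set (WeakSpace ℝ E))))
    -- X a subspace of ℓ^∞(S) containing all functions t ↦ ⟨T_t x, x*⟩
    (X : Submodule ℝ (lp (fun _ : S => ℝ) ∞))
    (hX : ∀ x ∈ C, ∀ φ : E →L[ℝ] ℝ,
      ∃ g : lp (fun _ : S => ℝ) ∞, g ∈ X ∧ ∀ t : S, g t = φ (T t x))
    -- μ a mean on X : ‖μ‖ = μ(1) = 1 (X contains the constant function 1)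
    (μ : X →L[ℝ] ℝ)
    (hμnorm : ‖μ‖ = 1)
    (hμone : ∃ g : lp (fun _ : S => ℝ) ∞, ∃ hg : g ∈ X,
      (∀ t : S, g t = 1) ∧ μ ⟨g, hg⟩ = 1)
    -- the mapping T_μ determined by ⟨T_μ x, x*⟩ = μ_t⟨T_t x, x*⟩
    (Tμ : E → E)
    (hTμ : ∀ x ∈ C, ∀ (φ : E →L[ℝ] ℝ) (g : lp (fun _ : S => ℝ) ∞) (hg : g ∈ X),
      (∀ t : S, g t = φ (T t x)) → μ ⟨g, hg⟩ = φ (Tμ x))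
    -- every T_t is quasi-nonexpansive
    (hqne : ∀ t : S, ∀ x ∈ C, ∀ f ∈ C, T t f = f → ‖T t x - f‖ ≤ ‖x - f‖) :
    ∀ x ∈ C, ∀ f ∈ C, (∀ s : S, T s f = f) → ‖Tμ x - f‖ ≤ ‖x - f‖ :=
  tmu_fix_quasi_nonexpansive_general C T X hX μ hμnorm hμone Tμ hTμ hqne
end

section
/- Suppose E = H is a real Hilbert space and every mapping T_s (s ∈ S) is monotone on C, i.e. ⟨T_s x − T_s y, x − y⟩ ≥ 0 for all x, y ∈ C. Then T_μ is monotone: ⟨T_μ x − T_μ y, x − y⟩ ≥ 0 for all x, y ∈ C. -/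
open scoped ENNReal RealInnerProductSpace

/-! `⟪Tμ x - Tμ y, x - y⟫` is the mean of the nonnegative function `t ↦ ⟪T t x - T t y, x - y⟫`,
and a mean is positive: for `f ≥ 0` the function `‖f‖ • 1 - f` has sup norm at most `‖f‖`, so
`‖f‖ - μ f = μ (‖f‖ • 1 - f) ≤ ‖f‖`. -/

section Mean

variable {S : Type*} {X : Submodule ℝ (lp (fun _ : S => ℝ) ∞)}

lemma lp_infty_norm_smul_sub_le {e f : lp (fun _ : S => ℝ) ∞} (he : ∀ t, e t = 1)
    (hf : ∀ t, 0 ≤ f t) : ‖‖f‖ • e - f‖ ≤ ‖f‖ := by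
  refine lp.norm_le_of_forall_le (norm_nonneg f) fun t => ?_
  have hft : f t ≤ ‖f‖ := (le_abs_self _).trans (lp.norm_apply_le_norm ENNReal.top_ne_zero f t)
  have happly : (‖f‖ • e - f) t = ‖f‖ - f t := by
    simp only [lp.coeFn_sub, lp.coeFn_smul, Pi.sub_apply, Pi.smul_apply, smul_eq_mul, he t,
      mul_one]
  rw [happly, Real.norm_eq_abs, abs_le]
  constructor <;> linarith [hf t]

lemma map_nonneg_of_norm_le_one {μ : X →L[ℝ] ℝ} (hμ : ‖μ‖ ≤ 1) {e : X}
    (he : ∀ t, (e : lp (fun _ : S => ℝ) ∞) t = 1) (hμe : μ e = 1) {f : X}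
    (hf : ∀ t, 0 ≤ (f : lp (fun _ : S => ℝ) ∞) t) : 0 ≤ μ f := by
  have hbound : μ (‖f‖ • e - f) ≤ ‖f‖ :=
    calc μ (‖f‖ • e - f) ≤ ‖μ‖ * ‖‖f‖ • e - f‖ := (le_abs_self _).trans (μ.le_opNorm _)
      _ ≤ 1 * ‖f‖ := mul_le_mul hμ (lp_infty_norm_smul_sub_le he hf) (norm_nonneg _) zero_le_one
      _ = ‖f‖ := one_mul _
  rw [map_sub, map_smul, hμe, smul_eq_mul, mul_one] at hbound
  linarith

end Mean

theorem tmu_monotone_general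
    {S H : Type*}
    [NormedAddCommGroup H] [InnerProductSpace ℝ H]
    (C : Set H)
    -- the representation
    (T : S → H → H)
    -- X a subspace of ℓ^∞(S) containing all functions t ↦ ⟨T_t x, y⟩
    (X : Submodule ℝ (lp (fun _ : S => ℝ) ∞))
    (hX : ∀ x ∈ C, ∀ y : H,
      ∃ g : lp (fun _ : S => ℝ) ∞, g ∈ X ∧ ∀ t : S, g t = ⟪T t x, y⟫)
    -- μ a mean on X : ‖μ‖ = μ(1) = 1 (X contains the constant function 1)
    (μ : X →L[ℝ] ℝ)
    (hμnorm : ‖μ‖ = 1)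
    (hμone : ∃ g : lp (fun _ : S => ℝ) ∞, ∃ hg : g ∈ X,
      (∀ t : S, g t = 1) ∧ μ ⟨g, hg⟩ = 1)
    -- the mapping T_μ determined by ⟨T_μ x, y⟩ = μ_t⟨T_t x, y⟩
    (Tμ : H → H)
    (hTμ : ∀ x ∈ C, ∀ (y : H) (g : lp (fun _ : S => ℝ) ∞) (hg : g ∈ X),
      (∀ t : S, g t = ⟪T t x, y⟫) → μ ⟨g, hg⟩ = ⟪Tμ x, y⟫)
    -- every T_s is monotone on C
    (hmono : ∀ s : S, ∀ x ∈ C, ∀ y ∈ C, 0 ≤ ⟪T s x - T s y, x - y⟫) :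
    ∀ x ∈ C, ∀ y ∈ C, 0 ≤ ⟪Tμ x - Tμ y, x - y⟫ := by
  intro x hx y hy
  obtain ⟨e, heX, he, hμe⟩ := hμone
  obtain ⟨gx, hgxX, hgx⟩ := hX x hx (x - y)
  obtain ⟨gy, hgyX, hgy⟩ := hX y hy (x - y)
  have hdiff_nonneg : ∀ t, 0 ≤ (gx - gy) t := fun t => by
    simpa [hgx t, hgy t, inner_sub_left] using hmono t x hx y hy
  have hμdiff : μ (⟨gx, hgxX⟩ - ⟨gy, hgyX⟩) = ⟪Tμ x - Tμ y, x - y⟫ := by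
    rw [map_sub, hTμ x hx _ gx hgxX hgx, hTμ y hy _ gy hgyX hgy, inner_sub_left]
  rw [← hμdiff]
  exact map_nonneg_of_norm_le_one hμnorm.le (e := ⟨e, heX⟩) he hμe hdiff_nonneg

/-- If `H` is a real Hilbert space and every `T_s` is monotone on `C`, then `T_μ` is
monotone on `C`. -/
theorem tmu_monotone
    {S H : Type*} [Semigroup S]
    [NormedAddCommGroup H] [InnerProductSpace ℝ H] [CompleteSpace H]
    -- C nonempty closed convex
    (C : Set H) (hCne : C.Nonempty) (hCcl : IsClosed C) (hCcv : Convex ℝ C)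
    -- the representation
    (T : S → H → H)
    (hTC : ∀ s : S, ∀ x ∈ C, T s x ∈ C)
    (hrep : ∀ s t : S, ∀ x ∈ C, T (s * t) x = T s (T t x))
    -- weak closure of each orbit is weakly compact
    (hwcpt : ∀ x ∈ C, IsCompact (closure (Set.range (fun t => T t x) : Set (WeakSpace ℝ H))))
    -- X a subspace of ℓ^∞(S) containing all functions t ↦ ⟨T_t x, y⟩
    (X : Submodule ℝ (lp (fun _ : S => ℝ) ∞))
    (hX : ∀ x ∈ C, ∀ y : H,
      ∃ g : lp (fun _ : S => ℝ) ∞, g ∈ X ∧ ∀ t : S, g t = ⟪T t x, y⟫)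
    -- μ a mean on X : ‖μ‖ = μ(1) = 1 (X contains the constant function 1)
    (μ : X →L[ℝ] ℝ)
    (hμnorm : ‖μ‖ = 1)
    (hμone : ∃ g : lp (fun _ : S => ℝ) ∞, ∃ hg : g ∈ X,
      (∀ t : S, g t = 1) ∧ μ ⟨g, hg⟩ = 1)
    -- the mapping T_μ determined by ⟨T_μ x, y⟩ = μ_t⟨T_t x, y⟩
    (Tμ : H → H)
    (hTμ : ∀ x ∈ C, ∀ (y : H) (g : lp (fun _ : S => ℝ) ∞) (hg : g ∈ X),
      (∀ t : S, g t = ⟪T t x, y⟫) → μ ⟨g, hg⟩ = ⟪Tμ x, y⟫)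
    -- every T_s is monotone on C
    (hmono : ∀ s : S, ∀ x ∈ C, ∀ y ∈ C, 0 ≤ ⟪T s x - T s y, x - y⟫) :
    ∀ x ∈ C, ∀ y ∈ C, 0 ≤ ⟪Tμ x - Tμ y, x - y⟫ :=
  tmu_monotone_general C T X hX μ hμnorm hμone Tμ hTμ hmono
end

section
/- If every T_s (s ∈ S) is Q-G-nonexpansive, i.e. q_V(T_s x − T_s y) ≤ q_V(x − y) for all V ∈ ℬ whenever x, y ∈ C with (x, y) ∈ E(G), then T_μ is Q-G-nonexpansive: q_V(T_μ x − T_μ y) ≤ q_V(x − y) for all V ∈ ℬ and all x, y ∈ C with (x, y) ∈ E(G). -/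
open Topology
open scoped ENNReal

/-!
Hahn–Banach gives a continuous functional `φ` with `|φ| ≤ q_V` and
`φ (T_μ x - T_μ y) = q_V (T_μ x - T_μ y)`. That value is `μ` applied to
`t ↦ φ (T_t x - T_t y)`, whose sup norm is at most `q_V (x - y)` since each `T_t` is
`Q`-`G`-nonexpansive; and `‖μ‖ = 1`.
-/

theorem Seminorm.exists_strongDual_eq_abs_le {E : Type*} [AddCommGroup E] [Module ℝ E]
    [TopologicalSpace E] [PolynormableSpace ℝ E] {p : Seminorm ℝ E} (hp : Continuous p) (z : E) :
    ∃ φ : StrongDual ℝ E, φ z = p z ∧ ∀ x, |φ x| ≤ p x := by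
  have hker (c : ℝ) (hc : c • z = 0) : RingHom.id ℝ c • p z = 0 := by
    rcases smul_eq_zero.1 hc with rfl | rfl <;> simp
  set f := LinearPMap.mkSpanSingleton' z (p z) hker
  have hf : ∀ x : f.domain, f.toFun x ≤ p x := by
    rintro ⟨x, hx⟩
    obtain ⟨c, rfl⟩ := Submodule.mem_span_singleton.1 hx
    calc f.toFun ⟨c • z, hx⟩ = c * p z := LinearPMap.mkSpanSingleton'_apply z (p z) hker c hx
      _ ≤ |c| * p z := mul_le_mul_of_nonneg_right (le_abs_self c) (apply_nonneg p z)
      _ = p (c • z) := by rw [map_smul_eq_mul, Real.norm_eq_abs]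
  obtain ⟨φ, hφf, hφp⟩ :=
    Module.Dual.exists_continuous_extension_of_le_seminorm_real f.domain f.toFun hp hf
  exact ⟨φ, (hφf ⟨z, Submodule.mem_span_singleton_self z⟩).trans
    (LinearPMap.mkSpanSingleton'_apply_self z (p z) hker _), hφp⟩

theorem ContinuousLinearMap.apply_le_of_forall_abs_le {S : Type*}
    {X : Submodule ℝ (lp (fun _ : S => ℝ) ∞)} (μ : X →L[ℝ] ℝ) (hμ : ‖μ‖ ≤ 1) (g : X) {c : ℝ}
    (hc : 0 ≤ c) (hg : ∀ t, |(g : lp (fun _ : S => ℝ) ∞) t| ≤ c) : μ g ≤ c :=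
  calc μ g ≤ ‖μ‖ * ‖g‖ := (le_abs_self _).trans (μ.le_opNorm g)
    _ ≤ 1 * c := mul_le_mul hμ (lp.norm_le_of_forall_le hc hg) (norm_nonneg _) zero_le_one
    _ = c := one_mul c

theorem tmu_QG_nonexpansive_general
    {S E : Type*}
    [AddCommGroup E] [Module ℝ E] [TopologicalSpace E]
    [IsTopologicalAddGroup E] [ContinuousSMul ℝ E]
    -- ℬ a base at 0 of convex balanced sets; Q = {gauge V : V ∈ ℬ}
    (ℬ : Set (Set E)) (hbasis : (nhds (0 : E)).HasBasis (· ∈ ℬ) id)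
    (hBcv : ∀ V ∈ ℬ, Convex ℝ V) (hBbal : ∀ V ∈ ℬ, Balanced ℝ V)
    -- C nonempty closed convex
    (C : Set E)
    -- the representation
    (T : S → E → E)
    -- X a subspace of ℓ^∞(S) containing all functions t ↦ ⟨T_t x, x*⟩
    (X : Submodule ℝ (lp (fun _ : S => ℝ) ∞))
    (hX : ∀ x ∈ C, ∀ φ : E →L[ℝ] ℝ,
      ∃ g : lp (fun _ : S => ℝ) ∞, g ∈ X ∧ ∀ t : S, g t = φ (T t x))
    -- μ a mean on X : ‖μ‖ = μ(1) = 1 (X contains the constant function 1)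
    (μ : X →L[ℝ] ℝ)
    (hμnorm : ‖μ‖ = 1)
    -- the mapping T_μ satisfying ⟨T_μ x, x*⟩ = μ_t⟨T_t x, x*⟩
    (Tμ : E → E)
    (hTμ : ∀ x ∈ C, ∀ (φ : E →L[ℝ] ℝ) (g : lp (fun _ : S => ℝ) ∞) (hg : g ∈ X),
      (∀ t : S, g t = φ (T t x)) → μ ⟨g, hg⟩ = φ (Tμ x))
    -- the directed graph G with V(G) = C
    (Edg : Set (E × E)) (hEdg : Edg ⊆ C ×ˢ C)
    -- every T_s is Q-G-nonexpansive
    (hne : ∀ s : S, ∀ x y : E, (x, y) ∈ Edg → ∀ V ∈ ℬ,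
      gauge V (T s x - T s y) ≤ gauge V (x - y)) :
    ∀ x y : E, (x, y) ∈ Edg → ∀ V ∈ ℬ,
      gauge V (Tμ x - Tμ y) ≤ gauge V (x - y) := by
  intro x y hxy V hV
  obtain ⟨hx, hy⟩ := hEdg hxy
  have hV0 : V ∈ 𝓝 (0 : E) := hbasis.mem_of_mem hV
  have : LocallyConvexSpace ℝ E := .ofBasisZero ℝ E id _ hbasis hBcv
  obtain ⟨φ, hφz, hφle⟩ := (gaugeSeminorm (hBbal V hV) (hBcv V hV) (absorbent_nhds_zero hV0)
    |>.exists_strongDual_eq_abs_le (continuous_gauge (hBcv V hV) hV0) (Tμ x - Tμ y))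
  obtain ⟨gx, hgx, hgxφ⟩ := hX x hx φ
  obtain ⟨gy, hgy, hgyφ⟩ := hX y hy φ
  calc gauge V (Tμ x - Tμ y) = μ (⟨gx, hgx⟩ - ⟨gy, hgy⟩) := by
        rw [map_sub, hTμ x hx φ gx hgx hgxφ, hTμ y hy φ gy hgy hgyφ, ← map_sub, hφz]; rfl
    _ ≤ gauge V (x - y) := μ.apply_le_of_forall_abs_le hμnorm.le _ (gauge_nonneg _) fun t => by
        rw [Submodule.coe_sub, lp.coeFn_sub, Pi.sub_apply, hgxφ, hgyφ, ← map_sub]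
        exact (hφle _).trans (hne t x y hxy V hV)

/-- If every `T_s` is `Q`-`G`-nonexpansive, i.e. `q_V(T_s x − T_s y) ≤ q_V(x − y)` for all
`V ∈ ℬ` whenever `(x, y) ∈ E(G)`, then `T_μ` is `Q`-`G`-nonexpansive. -/
theorem tmu_QG_nonexpansive
    {S E : Type*} [Semigroup S]
    [AddCommGroup E] [Module ℝ E] [TopologicalSpace E]
    [IsTopologicalAddGroup E] [ContinuousSMul ℝ E]
    -- ℬ a base at 0 of convex balanced sets; Q = {gauge V : V ∈ ℬ}
    (ℬ : Set (Set E)) (hbasis : (nhds (0 : E)).HasBasis (· ∈ ℬ) id)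
    (hBcv : ∀ V ∈ ℬ, Convex ℝ V) (hBbal : ∀ V ∈ ℬ, Balanced ℝ V)
    -- C nonempty closed convex
    (C : Set E) (hCne : C.Nonempty) (hCcl : IsClosed C) (hCcv : Convex ℝ C)
    -- the representation
    (T : S → E → E)
    (hTC : ∀ s : S, ∀ x ∈ C, T s x ∈ C)
    (hrep : ∀ s t : S, ∀ x ∈ C, T (s * t) x = T s (T t x))
    -- X a subspace of ℓ^∞(S) containing all functions t ↦ ⟨T_t x, x*⟩
    (X : Submodule ℝ (lp (fun _ : S => ℝ) ∞))
    (hX : ∀ x ∈ C, ∀ φ : E →L[ℝ] ℝ,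
      ∃ g : lp (fun _ : S => ℝ) ∞, g ∈ X ∧ ∀ t : S, g t = φ (T t x))
    -- μ a mean on X : ‖μ‖ = μ(1) = 1 (X contains the constant function 1)
    (μ : X →L[ℝ] ℝ)
    (hμnorm : ‖μ‖ = 1)
    (hμone : ∃ g : lp (fun _ : S => ℝ) ∞, ∃ hg : g ∈ X,
      (∀ t : S, g t = 1) ∧ μ ⟨g, hg⟩ = 1)
    -- the mapping T_μ satisfying ⟨T_μ x, x*⟩ = μ_t⟨T_t x, x*⟩
    (Tμ : E → E)
    (hTμ : ∀ x ∈ C, ∀ (φ : E →L[ℝ] ℝ) (g : lp (fun _ : S => ℝ) ∞) (hg : g ∈ X),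
      (∀ t : S, g t = φ (T t x)) → μ ⟨g, hg⟩ = φ (Tμ x))
    -- the directed graph G with V(G) = C
    (Edg : Set (E × E)) (hEdg : Edg ⊆ C ×ˢ C)
    -- every T_s is Q-G-nonexpansive
    (hne : ∀ s : S, ∀ x y : E, (x, y) ∈ Edg → ∀ V ∈ ℬ,
      gauge V (T s x - T s y) ≤ gauge V (x - y)) :
    ∀ x y : E, (x, y) ∈ Edg → ∀ V ∈ ℬ,
      gauge V (Tμ x - Tμ y) ≤ gauge V (x - y) :=
  tmu_QG_nonexpansive_general ℬ hbasis hBcv hBbal C T X hX μ hμnorm Tμ hTμ Edg hEdg hne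
end

section
/- Suppose moreover that E = D* is the continuous dual of a real locally convex space D (with the duality pairing realizing E* on D through weak-* continuous functionals), that C is a weak-*-closed convex subset of E, that U is a convex neighbourhood of 0 in D with |⟨z, T_t x⟩| ≤ 1 for all z ∈ U, t ∈ S, x ∈ C, and that for every x ∈ C and z ∈ D the function t ↦ ⟨z, T_t x⟩ belongs to X. If T_μ : C → E satisfies ⟨z, T_μ x⟩ = μ_t⟨z, T_t x⟩ for all z ∈ D and x ∈ C, then T_μ x belongs to the weak-* closure of the convex hull of {T_t x : t ∈ S} for every x ∈ C. -/
/-!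
If `T_μ x` were outside the weak-* closed convex hull of the orbit, Hahn–Banach would separate it
by a weak-* continuous functional, i.e. by evaluation at some `z ∈ D`: `⟨z, T_t x⟩ < c < ⟨z, T_μ x⟩`
for all `t`. But a mean is positive, so `μ_t⟨z, T_t x⟩ ≤ c`.
-/

open scoped ENNReal

theorem WeakBilin.mem_closure_convexHull_of_forall_le {E F : Type*} [AddCommGroup E] [Module ℝ E]
    [AddCommGroup F] [Module ℝ F] {B : E →ₗ[ℝ] F →ₗ[ℝ] ℝ} {s : Set (WeakBilin B)} {y : WeakBilin B}
    (h : ∀ (z : F) (c : ℝ), (∀ a ∈ s, B a z < c) → B y z ≤ c) :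
    y ∈ closure (convexHull ℝ s) := by
  by_contra hy
  obtain ⟨f, u, hfu, huy⟩ := geometric_hahn_banach_closed_point
    (convex_convexHull ℝ s).closure isClosed_closure hy
  obtain ⟨z, rfl⟩ := LinearMap.dualEmbedding_surjective B f
  have hsz : ∀ a ∈ s, B a z < u := fun a ha ↦
    hfu a (subset_closure (subset_convexHull ℝ s ha))
  exact (h z u hsz).not_gt huy

section Mean

variable {S : Type*} {X : Submodule ℝ (lp (fun _ : S ↦ ℝ) ∞)} {μ : X →L[ℝ] ℝ}
  {e : lp (fun _ : S ↦ ℝ) ∞} {he : e ∈ X}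

theorem mean_nonneg (hμ : ‖μ‖ ≤ 1) (he1 : ∀ t, e t = 1) (hμe : μ ⟨e, he⟩ = 1)
    {g : lp (fun _ : S ↦ ℝ) ∞} (hg : g ∈ X) (hg0 : ∀ t, 0 ≤ g t) : 0 ≤ μ ⟨g, hg⟩ := by
  set m := ‖g‖
  -- `0 ≤ m • e - g ≤ m` pointwise, so `m - μ g ≤ ‖μ‖ * m ≤ m`.
  have hk : m • e - g ∈ X := X.sub_mem (X.smul_mem m he) hg
  have hk_le : ‖m • e - g‖ ≤ m := by
    refine lp.norm_le_of_forall_le (norm_nonneg g) fun t ↦ ?_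
    have hgt : ‖g t‖ ≤ m := lp.norm_apply_le_norm ENNReal.top_ne_zero g t
    rw [Real.norm_eq_abs] at hgt ⊢
    simp only [lp.coeFn_sub, lp.coeFn_smul, Pi.sub_apply, Pi.smul_apply, he1, smul_eq_mul,
      mul_one]
    rw [abs_le] at hgt ⊢
    constructor <;> linarith [hg0 t]
  have hμk : μ ⟨m • e - g, hk⟩ = m - μ ⟨g, hg⟩ := by
    change μ (m • ⟨e, he⟩ - ⟨g, hg⟩) = _
    rw [map_sub, map_smul, hμe, smul_eq_mul, mul_one]
  have hμk_le : μ ⟨m • e - g, hk⟩ ≤ m :=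
    calc μ ⟨m • e - g, hk⟩ ≤ ‖μ ⟨m • e - g, hk⟩‖ := Real.le_norm_self _
      _ ≤ ‖μ‖ * ‖m • e - g‖ := μ.le_opNorm _
      _ ≤ 1 * m := by gcongr
      _ = m := one_mul m
  linarith

theorem mean_le_of_forall_le_s16 (hμ : ‖μ‖ ≤ 1) (he1 : ∀ t, e t = 1) (hμe : μ ⟨e, he⟩ = 1)
    {g : lp (fun _ : S ↦ ℝ) ∞} (hg : g ∈ X) {c : ℝ} (hgc : ∀ t, g t ≤ c) : μ ⟨g, hg⟩ ≤ c := by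
  have hk : c • e - g ∈ X := X.sub_mem (X.smul_mem c he) hg
  have hk0 := mean_nonneg hμ he1 hμe hk fun t ↦ by
    simp only [lp.coeFn_sub, lp.coeFn_smul, Pi.sub_apply, Pi.smul_apply, he1, smul_eq_mul, mul_one]
    linarith [hgc t]
  change 0 ≤ μ (c • ⟨e, he⟩ - ⟨g, hg⟩) at hk0
  rw [map_sub, map_smul, hμe, smul_eq_mul, mul_one] at hk0
  linarith

end Mean

theorem tmu_mem_weakstar_closure_convexHull_general
    {S D : Type*}
    [AddCommGroup D] [Module ℝ D] [TopologicalSpace D]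
    -- C a nonempty weak-*-closed convex subset of E = D*
    (C : Set (WeakDual ℝ D))
    -- the representation
    (T : S → WeakDual ℝ D → WeakDual ℝ D)
    -- X a subspace of ℓ^∞(S) containing all functions t ↦ ⟨z, T_t x⟩
    (X : Submodule ℝ (lp (fun _ : S => ℝ) ∞))
    (hX : ∀ x ∈ C, ∀ z : D,
      ∃ g : lp (fun _ : S => ℝ) ∞, g ∈ X ∧ ∀ t : S, g t = T t x z)
    -- μ a mean on X : ‖μ‖ = μ(1) = 1 (X contains the constant function 1)
    (μ : X →L[ℝ] ℝ)
    (hμnorm : ‖μ‖ = 1)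
    (hμone : ∃ g : lp (fun _ : S => ℝ) ∞, ∃ hg : g ∈ X,
      (∀ t : S, g t = 1) ∧ μ ⟨g, hg⟩ = 1)
    -- the mapping T_μ satisfying ⟨z, T_μ x⟩ = μ_t⟨z, T_t x⟩
    (Tμ : WeakDual ℝ D → WeakDual ℝ D)
    (hTμ : ∀ x ∈ C, ∀ (z : D) (g : lp (fun _ : S => ℝ) ∞) (hg : g ∈ X),
      (∀ t : S, g t = T t x z) → μ ⟨g, hg⟩ = Tμ x z) :
    ∀ x ∈ C, Tμ x ∈ closure (convexHull ℝ (Set.range fun t => T t x)) := by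
  obtain ⟨e, he, he1, hμe⟩ := hμone
  intro x hx
  refine WeakBilin.mem_closure_convexHull_of_forall_le fun z c hc ↦ ?_
  obtain ⟨g, hg, hgt⟩ := hX x hx z
  have hgc : ∀ t, g t ≤ c := fun t ↦ (hgt t).trans_le (hc _ ⟨t, rfl⟩).le
  change Tμ x z ≤ c
  rw [← hTμ x hx z g hg hgt]
  exact mean_le_of_forall_le_s16 hμnorm.le he1 hμe hg hgc

/-- If `E = D*` is the dual of a real locally convex space `D` with the weak-* topology,
`C` is a weak-*-closed convex subset of `E`, `|⟨z, T_t x⟩| ≤ 1` for `z ∈ U`, `t ∈ S`,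
`x ∈ C`, and `⟨z, T_μ x⟩ = μ_t⟨z, T_t x⟩` for all `z ∈ D`, then `T_μ x` lies in the weak-*
closure of the convex hull of `{T_t x : t ∈ S}` for every `x ∈ C`. -/
theorem tmu_mem_weakstar_closure_convexHull
    {S D : Type*} [Semigroup S]
    [AddCommGroup D] [Module ℝ D] [TopologicalSpace D]
    [IsTopologicalAddGroup D] [ContinuousSMul ℝ D] [LocallyConvexSpace ℝ D]
    -- C a nonempty weak-*-closed convex subset of E = D*
    (C : Set (WeakDual ℝ D)) (hCne : C.Nonempty) (hCcl : IsClosed C) (hCcv : Convex ℝ C)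
    -- the representation
    (T : S → WeakDual ℝ D → WeakDual ℝ D)
    (hTC : ∀ s : S, ∀ x ∈ C, T s x ∈ C)
    (hrep : ∀ s t : S, ∀ x ∈ C, T (s * t) x = T s (T t x))
    -- U a convex neighbourhood of 0 in D with |⟨z, T_t x⟩| ≤ 1 on U
    (U : Set D) (hU0 : U ∈ nhds (0 : D)) (hUcv : Convex ℝ U)
    (hbd : ∀ z ∈ U, ∀ t : S, ∀ x ∈ C, |T t x z| ≤ 1)
    -- X a subspace of ℓ^∞(S) containing all functions t ↦ ⟨z, T_t x⟩
    (X : Submodule ℝ (lp (fun _ : S => ℝ) ∞))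
    (hX : ∀ x ∈ C, ∀ z : D,
      ∃ g : lp (fun _ : S => ℝ) ∞, g ∈ X ∧ ∀ t : S, g t = T t x z)
    -- μ a mean on X : ‖μ‖ = μ(1) = 1 (X contains the constant function 1)
    (μ : X →L[ℝ] ℝ)
    (hμnorm : ‖μ‖ = 1)
    (hμone : ∃ g : lp (fun _ : S => ℝ) ∞, ∃ hg : g ∈ X,
      (∀ t : S, g t = 1) ∧ μ ⟨g, hg⟩ = 1)
    -- the mapping T_μ satisfying ⟨z, T_μ x⟩ = μ_t⟨z, T_t x⟩
    (Tμ : WeakDual ℝ D → WeakDual ℝ D)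
    (hTμ : ∀ x ∈ C, ∀ (z : D) (g : lp (fun _ : S => ℝ) ∞) (hg : g ∈ X),
      (∀ t : S, g t = T t x z) → μ ⟨g, hg⟩ = Tμ x z) :
    ∀ x ∈ C, Tμ x ∈ closure (convexHull ℝ (Set.range fun t => T t x)) :=
  tmu_mem_weakstar_closure_convexHull_general C T X hX μ hμnorm hμone Tμ hTμ
end

section
/- Let a ∈ E be a Q-G-attractive point of 𝒮, i.e. q_V(a − T_t x) ≤ q_V(a − x) for every V ∈ ℬ, every t ∈ S and every x ∈ C with (x, a) ∈ E(G); assume also that for every x ∈ C and x* ∈ E* the function t ↦ ⟨a − T_t x, x*⟩ belongs to X. Then a is a Q-G-attractive point of T_μ: q_V(a − T_μ x) ≤ q_V(a − x) for every V ∈ ℬ and every x ∈ C with (x, a) ∈ E(G). -/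
open Filter Topology
open scoped ENNReal

/-!
By Hahn–Banach there is `φ ∈ E*` with `φ (a - T_μ x) = q_V (a - T_μ x)` and `|φ| ≤ q_V`. Since `μ`
fixes constants, `φ (a - T_μ x) = μ_t φ (a - T_t x)`, and since `‖μ‖ ≤ 1` this is at most
`sup_t q_V (a - T_t x) ≤ q_V (a - x)`.
-/

theorem LinearMap.continuous_of_abs_le_seminorm {E : Type*} [AddCommGroup E] [Module ℝ E]
    [TopologicalSpace E] [IsTopologicalAddGroup E] (φ : E →ₗ[ℝ] ℝ) {p : Seminorm ℝ E}
    (hp : Continuous p) (hφ : ∀ z, |φ z| ≤ p z) : Continuous φ := by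
  refine continuous_of_continuousAt_zero φ ?_
  have hp0 : Tendsto p (𝓝 0) (𝓝 0) := by simpa using hp.tendsto 0
  simpa [ContinuousAt] using squeeze_zero_norm hφ hp0

theorem Seminorm.exists_dual_vector {E : Type*} [AddCommGroup E] [Module ℝ E]
    [TopologicalSpace E] [IsTopologicalAddGroup E] {p : Seminorm ℝ E} (hp : Continuous p)
    (y : E) : ∃ φ : E →L[ℝ] ℝ, φ y = p y ∧ ∀ z, |φ z| ≤ p z := by
  have hker : ∀ c : ℝ, c • y = 0 → c • p y = 0 := by
    intro c hc
    rcases smul_eq_zero.1 hc with rfl | rfl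
    · exact zero_smul ℝ _
    · rw [map_zero, smul_zero]
  set f := LinearPMap.mkSpanSingleton' (σ := RingHom.id ℝ) y (p y) hker
  have hfp : ∀ z : f.domain, f z ≤ p z := by
    rintro ⟨z, hz⟩
    obtain ⟨c, rfl⟩ := Submodule.mem_span_singleton.1 hz
    rw [LinearPMap.mkSpanSingleton'_apply, RingHom.id_apply, smul_eq_mul, map_smul_eq_mul,
      Real.norm_eq_abs]
    exact mul_le_mul_of_nonneg_right (le_abs_self c) (apply_nonneg p y)
  obtain ⟨φ, hφf, hφp⟩ := Module.Dual.exists_extension_of_le_seminorm_real _ f.toFun hfp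
  refine ⟨⟨φ, φ.continuous_of_abs_le_seminorm hp hφp⟩, ?_, hφp⟩
  exact (hφf ⟨y, Submodule.mem_span_singleton_self y⟩).trans
    (LinearPMap.mkSpanSingleton'_apply_self _ _ hker _)

section Mean

variable {S : Type*} {X : Submodule ℝ (lp (fun _ : S => ℝ) ∞)} {μ : X →L[ℝ] ℝ}

theorem mean_le_of_forall_abs_le (hμ : ‖μ‖ ≤ 1) (g : X) {r : ℝ} (hr : 0 ≤ r)
    (hg : ∀ t, |(g : lp (fun _ : S => ℝ) ∞) t| ≤ r) : μ g ≤ r :=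
  calc μ g ≤ ‖μ‖ * ‖g‖ := (le_abs_self _).trans (μ.le_opNorm g)
    _ ≤ 1 * r := mul_le_mul hμ (lp.norm_le_of_forall_le hr hg) (norm_nonneg _) zero_le_one
    _ = r := one_mul r

theorem mean_eq_const_sub
    (hμone : ∃ e : lp (fun _ : S => ℝ) ∞, ∃ he : e ∈ X, (∀ t : S, e t = 1) ∧ μ ⟨e, he⟩ = 1)
    {c : ℝ} (f g : X)
    (hfg : ∀ t, (f : lp (fun _ : S => ℝ) ∞) t = c - (g : lp (fun _ : S => ℝ) ∞) t) :
    μ f = c - μ g := by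
  obtain ⟨e, heX, he, hμe⟩ := hμone
  have hf : f = c • (⟨e, heX⟩ : X) - g := by
    ext t
    rw [hfg, Submodule.coe_sub, Submodule.coe_smul, lp.coeFn_sub, lp.coeFn_smul, Pi.sub_apply,
      Pi.smul_apply, he, smul_eq_mul, mul_one]
  rw [hf, map_sub, map_smul, hμe, smul_eq_mul, mul_one]

end Mean

theorem tmu_QG_attractive_point_general
    {S E : Type*} [Semigroup S]
    [AddCommGroup E] [Module ℝ E] [TopologicalSpace E]
    [IsTopologicalAddGroup E] [ContinuousSMul ℝ E]
    -- ℬ a base at 0 of convex balanced sets; Q = {gauge V : V ∈ ℬ}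
    (ℬ : Set (Set E)) (hbasis : (nhds (0 : E)).HasBasis (· ∈ ℬ) id)
    (hBcv : ∀ V ∈ ℬ, Convex ℝ V) (hBbal : ∀ V ∈ ℬ, Balanced ℝ V)
    -- C nonempty closed convex
    (C : Set E)
    -- the representation
    (T : S → E → E)
    -- X a subspace of ℓ^∞(S) containing all functions t ↦ ⟨T_t x, x*⟩
    (X : Submodule ℝ (lp (fun _ : S => ℝ) ∞))
    (hX : ∀ x ∈ C, ∀ φ : E →L[ℝ] ℝ,
      ∃ g : lp (fun _ : S => ℝ) ∞, g ∈ X ∧ ∀ t : S, g t = φ (T t x))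
    -- μ a mean on X : ‖μ‖ = μ(1) = 1 (X contains the constant function 1)
    (μ : X →L[ℝ] ℝ)
    (hμnorm : ‖μ‖ = 1)
    (hμone : ∃ g : lp (fun _ : S => ℝ) ∞, ∃ hg : g ∈ X,
      (∀ t : S, g t = 1) ∧ μ ⟨g, hg⟩ = 1)
    -- the mapping T_μ satisfying ⟨T_μ x, x*⟩ = μ_t⟨T_t x, x*⟩
    (Tμ : E → E)
    (hTμ : ∀ x ∈ C, ∀ (φ : E →L[ℝ] ℝ) (g : lp (fun _ : S => ℝ) ∞) (hg : g ∈ X),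
      (∀ t : S, g t = φ (T t x)) → μ ⟨g, hg⟩ = φ (Tμ x))
    -- the directed graph G with V(G) = C
    (Edg : Set (E × E))
    -- a is a Q-G-attractive point of 𝒮
    (a : E)
    (hattr : ∀ t : S, ∀ x ∈ C, (x, a) ∈ Edg → ∀ V ∈ ℬ,
      gauge V (a - T t x) ≤ gauge V (a - x))
    -- t ↦ ⟨a − T_t x, x*⟩ belongs to X
    (haX : ∀ x ∈ C, ∀ φ : E →L[ℝ] ℝ,
      ∃ g : lp (fun _ : S => ℝ) ∞, g ∈ X ∧ ∀ t : S, g t = φ (a - T t x)) :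
    ∀ x ∈ C, (x, a) ∈ Edg → ∀ V ∈ ℬ, gauge V (a - Tμ x) ≤ gauge V (a - x) := by
  intro x hx hxa V hV
  have hV0 : V ∈ 𝓝 (0 : E) := hbasis.mem_of_mem hV
  obtain ⟨φ, hφ, hφle⟩ :=
    (gaugeSeminorm (hBbal V hV) (hBcv V hV) (absorbent_nhds_zero hV0)).exists_dual_vector
      (continuous_gauge (hBcv V hV) hV0) (a - Tμ x)
  obtain ⟨f, hfX, hf⟩ := haX x hx φ
  obtain ⟨g, hgX, hg⟩ := hX x hx φ
  have hμf : μ ⟨f, hfX⟩ = φ (a - Tμ x) := by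
    rw [mean_eq_const_sub hμone (c := φ a) _ ⟨g, hgX⟩ (by simp [hf, hg]),
      hTμ x hx φ g hgX hg, map_sub]
  calc gauge V (a - Tμ x) = μ ⟨f, hfX⟩ := hμf ▸ hφ.symm
    _ ≤ gauge V (a - x) := mean_le_of_forall_abs_le hμnorm.le _ (gauge_nonneg _)
        fun t => (hf t ▸ hφle _).trans (hattr t x hx hxa V hV)

/-- If `a ∈ E` is a `Q`-`G`-attractive point of `𝒮`, i.e. `q_V(a − T_t x) ≤ q_V(a − x)` for
every `V ∈ ℬ`, `t ∈ S` and `x ∈ C` with `(x, a) ∈ E(G)`, and the functions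
`t ↦ ⟨a − T_t x, x*⟩` belong to `X`, then `a` is a `Q`-`G`-attractive point of `T_μ`. -/
theorem tmu_QG_attractive_point
    {S E : Type*} [Semigroup S]
    [AddCommGroup E] [Module ℝ E] [TopologicalSpace E]
    [IsTopologicalAddGroup E] [ContinuousSMul ℝ E]
    -- ℬ a base at 0 of convex balanced sets; Q = {gauge V : V ∈ ℬ}
    (ℬ : Set (Set E)) (hbasis : (nhds (0 : E)).HasBasis (· ∈ ℬ) id)
    (hBcv : ∀ V ∈ ℬ, Convex ℝ V) (hBbal : ∀ V ∈ ℬ, Balanced ℝ V)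
    -- C nonempty closed convex
    (C : Set E) (hCne : C.Nonempty) (hCcl : IsClosed C) (hCcv : Convex ℝ C)
    -- the representation
    (T : S → E → E)
    (hTC : ∀ s : S, ∀ x ∈ C, T s x ∈ C)
    (hrep : ∀ s t : S, ∀ x ∈ C, T (s * t) x = T s (T t x))
    -- X a subspace of ℓ^∞(S) containing all functions t ↦ ⟨T_t x, x*⟩
    (X : Submodule ℝ (lp (fun _ : S => ℝ) ∞))
    (hX : ∀ x ∈ C, ∀ φ : E →L[ℝ] ℝ,
      ∃ g : lp (fun _ : S => ℝ) ∞, g ∈ X ∧ ∀ t : S, g t = φ (T t x))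
    -- μ a mean on X : ‖μ‖ = μ(1) = 1 (X contains the constant function 1)
    (μ : X →L[ℝ] ℝ)
    (hμnorm : ‖μ‖ = 1)
    (hμone : ∃ g : lp (fun _ : S => ℝ) ∞, ∃ hg : g ∈ X,
      (∀ t : S, g t = 1) ∧ μ ⟨g, hg⟩ = 1)
    -- the mapping T_μ satisfying ⟨T_μ x, x*⟩ = μ_t⟨T_t x, x*⟩
    (Tμ : E → E)
    (hTμ : ∀ x ∈ C, ∀ (φ : E →L[ℝ] ℝ) (g : lp (fun _ : S => ℝ) ∞) (hg : g ∈ X),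
      (∀ t : S, g t = φ (T t x)) → μ ⟨g, hg⟩ = φ (Tμ x))
    -- the directed graph G with V(G) = C
    (Edg : Set (E × E)) (hEdg : Edg ⊆ C ×ˢ C)
    -- a is a Q-G-attractive point of 𝒮
    (a : E)
    (hattr : ∀ t : S, ∀ x ∈ C, (x, a) ∈ Edg → ∀ V ∈ ℬ,
      gauge V (a - T t x) ≤ gauge V (a - x))
    -- t ↦ ⟨a − T_t x, x*⟩ belongs to X
    (haX : ∀ x ∈ C, ∀ φ : E →L[ℝ] ℝ,
      ∃ g : lp (fun _ : S => ℝ) ∞, g ∈ X ∧ ∀ t : S, g t = φ (a - T t x)) :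
    ∀ x ∈ C, (x, a) ∈ Edg → ∀ V ∈ ℬ, gauge V (a - Tμ x) ≤ gauge V (a - x) :=
  tmu_QG_attractive_point_general ℬ hbasis hBcv hBbal C T X hX μ hμnorm hμone Tμ hTμ Edg a hattr haX
end
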